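/- arXiv:1306.0649 — 3 statements merged into one kernel-verified Lean document; each statement's English description precedes it below -/
import Mathlib

section
/- Let f_3 : F_p^n → [-1,1] and let A : F_p^m → F_p^n be a uniformly random injective affine map, m ≤ n. Then |E_A[‖Af_3‖_{U^d}^{2^d}] − ‖f_3‖_{U^d}^{2^d}| ≤ p^{d+1−m}, where Af_3 = f_3 ∘ A. -/
open Finset

/-- An affine embedding `F_p^m → F_p^n`. -/
def IsAffineEmbedding {p m n : ℕ} (A : (Fin m → ZMod p) → (Fin n → ZMod p)) : Prop :=
  Function.Injective A ∧
    ∃ (L : (Fin m → ZMod p) →ₗ[ZMod p] (Fin n → ZMod p)) (c : Fin n → ZMod p),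
      ∀ x, A x = L x + c

noncomputable instance {p m n : ℕ} [Fact p.Prime] :
    Fintype {A : (Fin m → ZMod p) → (Fin n → ZMod p) // IsAffineEmbedding A} :=
  Fintype.ofFinite _

/-- Gowers average of order `d`: `‖h‖_{U^d}^{2^d} = E_{x,y_1,…,y_d} ∏_{I⊆[d]} h(x+Σ_{i∈I}y_i)`. -/
noncomputable def gowersAvg {V : Type*} [AddCommGroup V] [Fintype V]
    (h : V → ℝ) (d : ℕ) : ℝ :=
  (∑ x : V, ∑ y : Fin d → V, ∏ I : Finset (Fin d), h (x + ∑ i ∈ I, y i)) /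
    ((Fintype.card V : ℝ) ^ (d + 1))

/-!
Both Gowers averages are expectations of `cubeProd f₃` over cubes `(x, y)`, and precomposing with
an affine embedding `A` replaces a cube by its image `cubeMap A (x, y)`. The affine group of `𝔽_p^n`
permutes the embeddings and acts transitively on cubes with linearly independent edges, so for a
fixed cube with independent edges the image under a uniformly random `A` is uniform among such
cubes of `𝔽_p^n`. Hence, if `c` is the mean of `cubeProd f₃` over those cubes and
`β_k ≤ p^d / p^k` is the proportion of cubes in `𝔽_p^k` with dependent edges, the two sides are
`(1 - β_m) c` and `(1 - β_n) c` up to errors `β_m` and `β_n`, which puts them within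
`2 p^d / p^m ≤ p^(d+1) / p^m` of each other.
-/

open scoped BigOperators Classical

-- A cube is a base point `s.1` with edge vectors `s.2`; its vertices are `s.1 + ∑ i ∈ I, s.2 i`.
abbrev Cube (V : Type*) (d : ℕ) : Type _ := V × (Fin d → V)

theorem card_filter_snd {α β : Type*} [Fintype α] [Fintype β] (P : β → Prop)
    [DecidablePred P] :
    #{s : α × β | P s.2} = Fintype.card α * #{b | P b} := by
  rw [card_filter, Fintype.sum_prod_type]
  simp only [← card_filter, sum_const, card_univ, smul_eq_mul]

section Counting

variable {K V : Type*} [Field K] [Fintype K] [AddCommGroup V] [Module K V] [Fintype V]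

theorem card_mem_span_range_le {d : ℕ} (y : Fin d → V) :
    #{v | v ∈ Submodule.span K (Set.range y)} ≤ Fintype.card K ^ d := by
  calc #{v | v ∈ Submodule.span K (Set.range y)}
      = Fintype.card (Submodule.span K (Set.range y)) := (Fintype.card_subtype _).symm
    _ = Fintype.card K ^ (Set.range y).finrank K := Module.card_eq_pow_finrank
    _ ≤ Fintype.card K ^ d := by
      gcongr
      · exact Fintype.card_pos
      · simpa using finrank_range_le_card (R := K) y

theorem card_not_linearIndependent_succ_le (d : ℕ) :
    #{y : Fin (d + 1) → V | ¬LinearIndependent K y} ≤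
      Fintype.card V * #{y : Fin d → V | ¬LinearIndependent K y} +
        Fintype.card K ^ d * Fintype.card V ^ d := by
  have hcons : #{y : Fin (d + 1) → V | ¬LinearIndependent K y} =
      #{q : Cube V d | ¬LinearIndependent K (Fin.cons q.1 q.2 : Fin (d + 1) → V)} :=
    card_equiv (Fin.consEquiv fun _ => V).symm fun y => by simp [Fin.consEquiv]
  have hspan : #{q : Cube V d | q.1 ∈ Submodule.span K (Set.range q.2)} ≤
      Fintype.card K ^ d * Fintype.card V ^ d := by
    rw [card_filter, Fintype.sum_prod_type, sum_comm]
    calc ∑ y : Fin d → V, ∑ v : V, (if v ∈ Submodule.span K (Set.range y) then 1 else 0)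
        ≤ ∑ _y : Fin d → V, Fintype.card K ^ d := by
          gcongr with y
          rw [← card_filter]
          exact card_mem_span_range_le y
      _ = Fintype.card K ^ d * Fintype.card V ^ d := by simp [mul_comm]
  calc #{y : Fin (d + 1) → V | ¬LinearIndependent K y}
      ≤ #(({q : Cube V d | ¬LinearIndependent K q.2} : Finset _) ∪
          ({q : Cube V d | q.1 ∈ Submodule.span K (Set.range q.2)} : Finset _)) := by
        rw [hcons]
        refine card_le_card fun q => ?_
        simp only [mem_filter, mem_union, mem_univ, true_and, linearIndependent_finCons]
        tauto
    _ ≤ _ := (card_union_le _ _).trans (by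
      rw [card_filter_snd (α := V) fun y : Fin d → V => ¬LinearIndependent K y]; gcongr)

theorem card_not_linearIndependent_mul_le (d : ℕ) :
    #{y : Fin d → V | ¬LinearIndependent K y} * Fintype.card V ≤
      Fintype.card K ^ d * Fintype.card V ^ d := by
  induction d with
  | zero => simp
  | succ d ih =>
    have hK : 2 ≤ Fintype.card K := Fintype.one_lt_card
    calc #{y : Fin (d + 1) → V | ¬LinearIndependent K y} * Fintype.card V
        ≤ (Fintype.card V * #{y : Fin d → V | ¬LinearIndependent K y} +
            Fintype.card K ^ d * Fintype.card V ^ d) * Fintype.card V := by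
          gcongr; exact card_not_linearIndependent_succ_le d
      _ = Fintype.card V * (#{y : Fin d → V | ¬LinearIndependent K y} * Fintype.card V) +
            Fintype.card K ^ d * Fintype.card V ^ (d + 1) := by ring
      _ ≤ Fintype.card V * (Fintype.card K ^ d * Fintype.card V ^ d) +
            Fintype.card K ^ d * Fintype.card V ^ (d + 1) := by gcongr
      _ = Fintype.card K ^ d * Fintype.card V ^ (d + 1) * 2 := by ring
      _ ≤ Fintype.card K ^ d * Fintype.card V ^ (d + 1) * Fintype.card K :=
          Nat.mul_le_mul_left _ hK
      _ = Fintype.card K ^ (d + 1) * Fintype.card V ^ (d + 1) := by ring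

theorem card_filter_not_linearIndependent_snd_div_le (d : ℕ) :
    (#{s : Cube V d | ¬LinearIndependent K s.2} : ℝ) /
        Fintype.card (Cube V d) ≤ Fintype.card K ^ d / Fintype.card V := by
  have hV : (0 : ℝ) < Fintype.card V := by exact_mod_cast Fintype.card_pos
  rw [card_filter_snd (α := V) fun y : Fin d → V => ¬LinearIndependent K y, Fintype.card_prod,
    Fintype.card_fun, Fintype.card_fin, div_le_div_iff₀ (by positivity) hV]
  exact_mod_cast (by nlinarith [card_not_linearIndependent_mul_le (K := K) (V := V) d] :
    Fintype.card V * #{y : Fin d → V | ¬LinearIndependent K y} * Fintype.card V ≤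
      Fintype.card K ^ d * (Fintype.card V * Fintype.card V ^ d))

end Counting

section Averaging

variable {α β S : Type*}

theorem card_fiber_eq_of_equivariant [Fintype α] {Φ : α → β} (e : α ≃ α) {σ : β → β}
    (hσ : Function.Injective σ) (h : ∀ a, Φ (e a) = σ (Φ a)) (t : β) :
    #{a | Φ a = σ t} = #{a | Φ a = t} :=
  (card_equiv e fun a => by simp [h, hσ.eq_iff]).symm

theorem expect_comp_eq_expect_of_card_fiber_eq [Fintype α] [Nonempty α] (Φ : α → β)
    (T : Finset β) (hΦ : ∀ a, Φ a ∈ T)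
    (hfib : ∀ t ∈ T, ∀ t' ∈ T, #{a | Φ a = t} = #{a | Φ a = t'}) (F : β → ℝ) :
    𝔼 a, F (Φ a) = 𝔼 t ∈ T, F t := by
  obtain ⟨a₀⟩ := ‹Nonempty α›
  set k := #{a | Φ a = Φ a₀}
  have hk : ∀ t ∈ T, #{a | Φ a = t} = k := fun t ht => hfib t ht _ (hΦ a₀)
  have hk0 : (k : ℝ) ≠ 0 := by
    exact_mod_cast (card_pos.2 ⟨a₀, by simp⟩).ne'
  have hsum : ∑ a, F (Φ a) = k * ∑ t ∈ T, F t := by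
    rw [← sum_fiberwise_of_maps_to (fun a _ => hΦ a), mul_sum]
    refine sum_congr rfl fun t ht => ?_
    rw [sum_congr rfl fun a ha => by rw [(mem_filter.1 ha).2], sum_const, nsmul_eq_mul, hk t ht]
  have hcard : Fintype.card α = k * #T := by
    rw [← card_univ, card_eq_sum_card_fiberwise fun a _ => hΦ a, sum_congr rfl hk, sum_const,
      smul_eq_mul, mul_comm]
  rw [Fintype.expect_eq_sum_div_card, expect_eq_sum_div_card, hsum, hcard]
  push_cast
  exact mul_div_mul_left _ _ hk0

theorem abs_expect_le_one {ι : Type*} (s : Finset ι) {f : ι → ℝ} (hf : ∀ i ∈ s, |f i| ≤ 1) :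
    |𝔼 i ∈ s, f i| ≤ 1 := by
  rcases s.eq_empty_or_nonempty with rfl | hs
  · simp
  · exact (abs_expect_le _ _).trans (expect_le hs fun i hi => hf i hi)

theorem abs_expect_sub_le [Fintype S] [Nonempty S] (P : S → Prop) (φ : S → ℝ)
    (hφ : ∀ s, |φ s| ≤ 1) (c : ℝ) (hc : ∑ s with P s, φ s = #{s | P s} * c) :
    |𝔼 s, φ s - (1 - #{s | ¬P s} / Fintype.card S) * c| ≤
      #{s | ¬P s} / Fintype.card S := by
  have hS : (0 : ℝ) < Fintype.card S := by exact_mod_cast Fintype.card_pos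
  have hcard : (#{s | P s} : ℝ) + #{s | ¬P s} = Fintype.card S := by
    exact_mod_cast card_filter_add_card_filter_not (s := univ) P
  have hsplit : 𝔼 s, φ s - (1 - #{s | ¬P s} / Fintype.card S) * c =
      (∑ s with ¬P s, φ s) / Fintype.card S := by
    rw [Fintype.expect_eq_sum_div_card, ← sum_filter_add_sum_filter_not univ P, hc]
    field_simp
    linear_combination c * hcard
  rw [hsplit, abs_div, abs_of_pos hS]
  gcongr
  calc |∑ s with ¬P s, φ s| ≤ ∑ s with ¬P s, |φ s| := abs_sum_le_sum_abs _ _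
    _ ≤ ∑ s with ¬P s, 1 := sum_le_sum fun s _ => hφ s
    _ = #{s | ¬P s} := by simp

theorem abs_sub_le_of_near_convex_comb {u w c β β' ε : ℝ} (hc : |c| ≤ 1)
    (hu : |u - (1 - β) * c| ≤ β) (hw : |w - (1 - β') * c| ≤ β') (hβ : β ≤ ε)
    (hβ' : β' ≤ ε) : |u - w| ≤ 2 * ε := by
  rw [abs_le] at hc hu hw ⊢
  rcases le_total β β' with h | h <;> constructor <;> nlinarith

end Averaging

theorem LinearIndependent.exists_linearEquiv_apply_eq {K V ι : Type*} [Field K] [AddCommGroup V]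
    [Module K V] [FiniteDimensional K V] {v w : ι → V} (hv : LinearIndependent K v)
    (hw : LinearIndependent K w) : ∃ g : V ≃ₗ[K] V, ∀ i, g (v i) = w i := by
  obtain ⟨g, hg⟩ := Submodule.exists_linearEquiv_restrict_eq
    ((Module.Basis.span hv).equiv (Module.Basis.span hw) (Equiv.refl ι))
  refine ⟨g, fun i => ?_⟩
  have hgi := hg (Module.Basis.span hv i)
  rw [Module.Basis.equiv_apply, Equiv.refl_apply] at hgi
  simpa [Module.Basis.span_apply] using hgi.symm

section Cube

variable {U V : Type*} [AddCommGroup U] [AddCommGroup V] {d : ℕ}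

def cubeMap (A : U → V) (s : Cube U d) : Cube V d :=
  (A s.1, fun i => A (s.1 + s.2 i) - A s.1)

def cubeProd (h : V → ℝ) (s : Cube V d) : ℝ :=
  ∏ I : Finset (Fin d), h (s.1 + ∑ i ∈ I, s.2 i)

theorem gowersAvg_eq_expect_cubeProd [Fintype V] (h : V → ℝ) (d : ℕ) :
    gowersAvg h d = 𝔼 s : Cube V d, cubeProd h s := by
  rw [gowersAvg, Fintype.expect_eq_sum_div_card, Fintype.sum_prod_type]
  simp [cubeProd, pow_succ']

theorem abs_cubeProd_le_one {h : V → ℝ} (hh : ∀ x, |h x| ≤ 1) (s : Cube V d) :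
    |cubeProd h s| ≤ 1 := by
  rw [cubeProd, abs_prod]
  exact prod_le_one (fun _ _ => abs_nonneg _) fun _ _ => hh _

theorem cubeMap_comp {W : Type*} [AddCommGroup W] (g : V → W) (A : U → V)
    (s : Cube U d) : cubeMap (g ∘ A) s = cubeMap g (cubeMap A s) := by
  simp [cubeMap]

theorem cubeMap_injective {A : U → V} (hA : Function.Injective A) :
    Function.Injective (cubeMap A (d := d)) := by
  rintro ⟨x, y⟩ ⟨x', y'⟩ h
  simp only [cubeMap, Prod.mk.injEq, funext_iff] at h
  obtain ⟨hx, hy⟩ := h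
  obtain rfl := hA hx
  exact Prod.ext rfl (funext fun i => add_left_cancel (hA (by simpa using hy i)))

theorem exists_affineEquiv_cubeMap_eq {K : Type*} [Field K] [Module K V] [FiniteDimensional K V]
    {s t : Cube V d} (hs : LinearIndependent K s.2) (ht : LinearIndependent K t.2) :
    ∃ g : V ≃ᵃ[K] V, cubeMap g s = t := by
  obtain ⟨M, hM⟩ := hs.exists_linearEquiv_apply_eq ht
  refine ⟨M.toAffineEquiv.trans (AffineEquiv.constVAdd K V (t.1 - M s.1)), ?_⟩
  ext i
  · simp [cubeMap]
  · simp [cubeMap, hM]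
    abel

variable {K : Type*} [Ring K] [Module K U] [Module K V]

theorem AffineMap.map_add_eq_add_linear (f : U →ᵃ[K] V) (x v : U) :
    f (x + v) = f x + f.linear v := by
  rw [add_comm x, ← vadd_eq_add, f.map_vadd, vadd_eq_add, add_comm]

theorem AffineMap.cubeMap_eq (f : U →ᵃ[K] V) (s : Cube U d) :
    cubeMap f s = (f s.1, f.linear ∘ s.2) := by
  ext i <;> simp [cubeMap, f.map_add_eq_add_linear]

theorem AffineMap.cubeProd_comp (h : V → ℝ) (f : U →ᵃ[K] V) (s : Cube U d) :
    cubeProd (h ∘ f) s = cubeProd h (cubeMap f s) := by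
  rw [f.cubeMap_eq, cubeProd, cubeProd]
  simp [f.map_add_eq_add_linear, map_sum]

theorem AffineMap.linearIndependent_cubeMap {f : U →ᵃ[K] V} (hf : Function.Injective f)
    {s : Cube U d} (hs : LinearIndependent K s.2) :
    LinearIndependent K (cubeMap f s).2 := by
  rw [f.cubeMap_eq]
  exact hs.map' f.linear (LinearMap.ker_eq_bot.2 (f.linear_injective_iff.2 hf))

end Cube

section AffineEmbedding

variable {p m n d : ℕ}

theorem isAffineEmbedding_iff {A : (Fin m → ZMod p) → (Fin n → ZMod p)} :
    IsAffineEmbedding A ↔ Function.Injective A ∧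
      ∃ f : (Fin m → ZMod p) →ᵃ[ZMod p] (Fin n → ZMod p), ⇑f = A := by
  refine ⟨fun ⟨hA, L, c, hL⟩ => ⟨hA, L.toAffineMap + AffineMap.const _ _ c, ?_⟩,
    fun ⟨hA, f, hf⟩ => ⟨hA, f.linear, f 0, fun x => by
      simpa [← hf, add_comm] using f.map_add_eq_add_linear 0 x⟩⟩
  ext x : 1
  simp [hL]

theorem IsAffineEmbedding.affineEquiv_comp {A : (Fin m → ZMod p) → (Fin n → ZMod p)}
    (hA : IsAffineEmbedding A) (g : (Fin n → ZMod p) ≃ᵃ[ZMod p] (Fin n → ZMod p)) :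
    IsAffineEmbedding (g ∘ A) := by
  obtain ⟨hinj, f, rfl⟩ := isAffineEmbedding_iff.1 hA
  exact isAffineEmbedding_iff.2 ⟨g.injective.comp hinj, g.toAffineMap.comp f, rfl⟩

theorem nonempty_affineEmbedding (hmn : m ≤ n) :
    Nonempty {A : (Fin m → ZMod p) → (Fin n → ZMod p) // IsAffineEmbedding A} :=
  ⟨⟨Function.ExtendByZero.linearMap (ZMod p) (Fin.castLE hmn),
    Function.extend_injective (Fin.castLE_injective hmn) 0, _, 0, fun _ => (add_zero _).symm⟩⟩

theorem expect_cubeMap_affineEmbedding [Fact p.Prime]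
    [Nonempty {A : (Fin m → ZMod p) → (Fin n → ZMod p) // IsAffineEmbedding A}]
    {s : Cube (Fin m → ZMod p) d} (hs : LinearIndependent (ZMod p) s.2)
    (F : Cube (Fin n → ZMod p) d → ℝ) :
    𝔼 A : {A : (Fin m → ZMod p) → (Fin n → ZMod p) // IsAffineEmbedding A},
        F (cubeMap A.1 s) =
      𝔼 t ∈ {t : Cube (Fin n → ZMod p) d |
        LinearIndependent (ZMod p) t.2}, F t := by
  refine expect_comp_eq_expect_of_card_fiber_eq _ _ (fun A => ?_) (fun t ht t' ht' => ?_) F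
  · obtain ⟨hinj, f, hf⟩ := isAffineEmbedding_iff.1 A.2
    simpa [← hf] using f.linearIndependent_cubeMap (hf ▸ hinj) hs
  · obtain ⟨g, rfl⟩ := exists_affineEquiv_cubeMap_eq (mem_filter.1 ht).2 (mem_filter.1 ht').2
    let e : {A : (Fin m → ZMod p) → (Fin n → ZMod p) // IsAffineEmbedding A} ≃
        {A : (Fin m → ZMod p) → (Fin n → ZMod p) // IsAffineEmbedding A} :=
      { toFun := fun A => ⟨g ∘ A.1, A.2.affineEquiv_comp g⟩
        invFun := fun A => ⟨g.symm ∘ A.1, A.2.affineEquiv_comp g.symm⟩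
        left_inv := fun A => by ext; simp
        right_inv := fun A => by ext; simp }
    exact (card_fiber_eq_of_equivariant e (cubeMap_injective g.injective)
      (fun A => cubeMap_comp g A.1 s) t).symm

theorem IsAffineEmbedding.gowersAvg_comp [NeZero p] {A : (Fin m → ZMod p) → (Fin n → ZMod p)}
    (hA : IsAffineEmbedding A) (h : (Fin n → ZMod p) → ℝ) (d : ℕ) :
    gowersAvg (fun x => h (A x)) d = 𝔼 s : Cube (Fin m → ZMod p) d, cubeProd h (cubeMap A s) := by
  obtain ⟨-, f, rfl⟩ := isAffineEmbedding_iff.1 hA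
  rw [gowersAvg_eq_expect_cubeProd]
  exact expect_congr rfl fun s _ => f.cubeProd_comp h s

theorem card_filter_not_linearIndependent_div_le_of_le [Fact p.Prime] {k : ℕ} (hk : m ≤ k) :
    (#{s : Cube (Fin k → ZMod p) d | ¬LinearIndependent (ZMod p) s.2} : ℝ) /
      Fintype.card (Cube (Fin k → ZMod p) d) ≤ (p : ℝ) ^ d / (p : ℝ) ^ m := by
  refine (card_filter_not_linearIndependent_snd_div_le d).trans ?_
  have hp : (1 : ℝ) ≤ p := by exact_mod_cast (Fact.out : p.Prime).one_lt.le
  simp only [Fintype.card_fun, Fintype.card_fin, ZMod.card, Nat.cast_pow]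
  gcongr

end AffineEmbedding

/-- Let `f₃ : F_p^n → [-1,1]`, `m ≤ n`, and let `A : F_p^m → F_p^n` be
a uniformly random affine embedding. Then
`|E_A ‖Af₃‖_{U^d}^{2^d} − ‖f₃‖_{U^d}^{2^d}| ≤ p^{d+1−m}`. -/
theorem gowersAvg_random_restriction {p m n d : ℕ} [Fact p.Prime] (hmn : m ≤ n)
    (f₃ : (Fin n → ZMod p) → ℝ) (hf₃ : ∀ x, f₃ x ∈ Set.Icc (-1 : ℝ) 1) :
    |(∑ A : {A : (Fin m → ZMod p) → (Fin n → ZMod p) // IsAffineEmbedding A},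
          gowersAvg (fun x => f₃ (A.1 x)) d) /
        (Fintype.card {A : (Fin m → ZMod p) → (Fin n → ZMod p) // IsAffineEmbedding A} : ℝ) -
      gowersAvg f₃ d| ≤ (p : ℝ) ^ (d + 1) / (p : ℝ) ^ m := by
  have := nonempty_affineEmbedding (p := p) hmn
  have hF : ∀ s : Cube (Fin n → ZMod p) d, |cubeProd f₃ s| ≤ 1 :=
    abs_cubeProd_le_one fun x => abs_le.2 (hf₃ x)
  set c := 𝔼 t ∈ {t : Cube (Fin n → ZMod p) d | LinearIndependent (ZMod p) t.2}, cubeProd f₃ t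
  rw [← Fintype.expect_eq_sum_div_card, expect_congr rfl fun A _ => A.2.gowersAvg_comp f₃ d,
    expect_comm, gowersAvg_eq_expect_cubeProd]
  have hU := abs_expect_sub_le (fun s : Cube (Fin m → ZMod p) d => LinearIndependent (ZMod p) s.2)
    (fun s => 𝔼 A : {A : (Fin m → ZMod p) → (Fin n → ZMod p) // IsAffineEmbedding A},
      cubeProd f₃ (cubeMap A.1 s)) (fun s => abs_expect_le_one _ fun A _ => hF _) c (by
        rw [sum_congr rfl fun s hs => expect_cubeMap_affineEmbedding (mem_filter.1 hs).2 _,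
          sum_const, nsmul_eq_mul])
  have hV := abs_expect_sub_le (fun s : Cube (Fin n → ZMod p) d => LinearIndependent (ZMod p) s.2)
    (cubeProd f₃) hF c (card_mul_expect _ _).symm
  refine (abs_sub_le_of_near_convex_comb (abs_expect_le_one _ fun t _ => hF t) hU hV
    (card_filter_not_linearIndependent_div_le_of_le le_rfl)
    (card_filter_not_linearIndependent_div_le_of_le hmn)).trans ?_
  have hp : (2 : ℝ) ≤ p := by exact_mod_cast (Fact.out : p.Prime).two_le
  rw [mul_div_assoc', pow_succ']
  gcongr
end

section
/- Let f : F_p^n → [0,1], let ψ(x) ∈ [0,1] and φ be defined as follows: B is a partition of F_p^n, φ is B-measurable with values in [0,1], and on each atom b with α = E[f|B](b) and β = φ(b), define ψ(x) = (β−α)/(1−α) if α ≤ β and f(x) = 0; ψ(x) = 1 if α ≤ β and f(x) = 1; ψ(x) = 0 if α > β and f(x) = 0; ψ(x) = β/α if α > β and f(x) = 1. (If α = 1 and α ≤ β then β = 1 and take ψ = f; similarly if α = 0 and α > β is vacuous.) Assume f is {0,1}-valued. Then: (i) E[ψ|B] = φ, and (ii) ‖f − ψ‖_1 = ‖E[f|B]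 − φ‖_1. -/
/-!
On an atom of `B` where `f = 1` on an `α`-fraction of the points, `ψ` is constant on `{f = 1}` and
on `{f = 0}`, so the average over the atom of any function of `f` and `ψ` is `α` times its value
on `{f = 1}` plus `1 - α` times its value on `{f = 0}`. Both claims thereby become identities in
`α` and `β = φ`; for the `L¹` claim one first replaces each summand by its average over its atom,
which does not change the total.
-/

open Finset

open scoped Classical in
/-- Conditional expectation over the fibers of `B`. -/
noncomputable def condExp {X α : Type*} [Fintype X] (B : X → α) (g : X → ℝ) (x : X) : ℝ :=
  (∑ y ∈ Finset.univ.filter (fun y => B y = B x), g y) /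
    ((Finset.univ.filter (fun y => B y = B x)).card : ℝ)

/-- `L¹` average. -/
noncomputable def l1Avg {X : Type*} [Fintype X] (g : X → ℝ) : ℝ :=
  (∑ x : X, |g x|) / (Fintype.card X : ℝ)

/-- The value of `ψ` at a point with `E[f|B] = α`, `φ = β` and `f = t`. -/
noncomputable def pullbackValue (α β t : ℝ) : ℝ :=
  if α ≤ β then (if t = 1 then 1 else (β - α) / (1 - α)) else (if t = 1 then β / α else 0)

section pullbackValue

variable {α β : ℝ}

theorem pullbackValue_mean (hβ : β ∈ Set.Icc (0 : ℝ) 1) :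
    α * pullbackValue α β 1 + (1 - α) * pullbackValue α β 0 = β := by
  obtain ⟨hβ0, hβ1⟩ := hβ
  simp only [pullbackValue, if_true, zero_ne_one, if_false]
  split_ifs with hαβ
  · rcases eq_or_ne α 1 with rfl | hα1
    · obtain rfl : β = 1 := le_antisymm hβ1 hαβ
      norm_num
    · field_simp [sub_ne_zero.mpr hα1.symm]; ring
  · field_simp [(hβ0.trans_lt (not_le.mp hαβ)).ne']; ring

theorem pullbackValue_dist (hβ : β ∈ Set.Icc (0 : ℝ) 1) :
    α * |1 - pullbackValue α β 1| + (1 - α) * |0 - pullbackValue α β 0| = |α - β| := by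
  obtain ⟨hβ0, hβ1⟩ := hβ
  simp only [pullbackValue, if_true, zero_ne_one, if_false]
  split_ifs with hαβ
  · rcases eq_or_ne α 1 with rfl | hα1
    · obtain rfl : β = 1 := le_antisymm hβ1 hαβ
      simp
    · have h1α : 0 < 1 - α := by linarith [lt_of_le_of_ne (hαβ.trans hβ1) hα1]
      rw [sub_self, abs_zero, mul_zero, zero_add, zero_sub, abs_neg,
        abs_of_nonneg (div_nonneg (by linarith) h1α.le), abs_of_nonpos (by linarith),
        mul_div_cancel₀ _ h1α.ne']
      ring
  · have hα : 0 < α := hβ0.trans_lt (not_le.mp hαβ)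
    rw [sub_zero, abs_zero, mul_zero, add_zero, ← abs_of_pos hα, ← abs_mul, abs_of_pos hα,
      mul_sub, mul_one, mul_div_cancel₀ _ hα.ne']

end pullbackValue

section condExp

variable {X ι : Type*} [Fintype X] (B : X → ι)

theorem condExp_congr {g h : X → ℝ} {x : X} (hgh : ∀ y, B y = B x → g y = h y) :
    condExp B g x = condExp B h x := by
  unfold condExp
  congr 1
  exact sum_congr rfl fun y hy => hgh y (by simpa using hy)

theorem condExp_eq_of_eq {g : X → ℝ} {x y : X} (hxy : B y = B x) :
    condExp B g y = condExp B g x := by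
  unfold condExp
  rw [hxy]

theorem condExp_comp_of_mem_zero_one {f : X → ℝ} (hf : ∀ y, f y ∈ ({0, 1} : Set ℝ))
    (g : ℝ → ℝ) (x : X) :
    condExp B (fun y => g (f y)) x = condExp B f x * g 1 + (1 - condExp B f x) * g 0 := by
  have hg : ∀ y, g (f y) = f y * g 1 + (1 - f y) * g 0 := fun y => by
    obtain h | h : f y = 0 ∨ f y = 1 := hf y <;> simp [h]
  unfold condExp
  simp only [hg, sum_add_distrib, ← sum_mul, sum_sub_distrib, sum_const, nsmul_eq_mul, mul_one]
  classical
  have hcard : (#(univ.filter fun y => B y = B x) : ℝ) ≠ 0 := by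
    exact_mod_cast (card_pos.mpr ⟨x, by simp⟩).ne'
  field_simp

theorem sum_condExp (g : X → ℝ) : ∑ x, condExp B g x = ∑ x, g x := by
  classical
  calc ∑ x, condExp B g x
      = ∑ x, ∑ y, if B y = B x then g y / #(univ.filter fun z => B z = B y) else 0 := by
        refine sum_congr rfl fun x _ => ?_
        rw [condExp, sum_div, sum_filter]
        refine sum_congr rfl fun y _ => ?_
        split_ifs with h
        · rw [h]
        · rfl
    _ = ∑ y, ∑ x, if B x = B y then g y / #(univ.filter fun z => B z = B y) else 0 := by
        rw [sum_comm]
        simp only [eq_comm]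
    _ = ∑ y, g y := by
        refine sum_congr rfl fun y _ => ?_
        have hcard : (#(univ.filter fun z => B z = B y) : ℝ) ≠ 0 := by
          exact_mod_cast (card_pos.mpr ⟨y, by simp⟩).ne'
        rw [← sum_filter, sum_const, nsmul_eq_mul, mul_div_cancel₀ _ hcard]

end condExp

theorem pullback_properties_general {X α : Type*} [Fintype X] (B : X → α)
    (f φ ψ : X → ℝ)
    (hf : ∀ x, f x ∈ ({0, 1} : Set ℝ))
    (hφmeas : ∀ x y, B x = B y → φ x = φ y)
    (hφrange : ∀ x, φ x ∈ Set.Icc (0 : ℝ) 1)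
    (hψ : ∀ x, ψ x =
      if condExp B f x ≤ φ x then
        (if f x = 1 then 1 else (φ x - condExp B f x) / (1 - condExp B f x))
      else
        (if f x = 1 then φ x / condExp B f x else 0)) :
    (∀ x, condExp B ψ x = φ x) ∧
    l1Avg (fun x => f x - ψ x) = l1Avg (fun x => condExp B f x - φ x) := by
  have hψ_atom : ∀ x y, B y = B x → ψ y = pullbackValue (condExp B f x) (φ x) (f y) :=
    fun x y hB => by rw [hψ y, condExp_eq_of_eq B hB, hφmeas y x hB]; rfl
  refine ⟨fun x => ?_, ?_⟩
  · rw [condExp_congr B (hψ_atom x), condExp_comp_of_mem_zero_one B hf,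
      pullbackValue_mean (hφrange x)]
  · unfold l1Avg
    rw [← sum_condExp B]
    congr 1
    refine sum_congr rfl fun x _ => ?_
    have hdist : ∀ y, B y = B x → |f y - ψ y| =
        |f y - pullbackValue (condExp B f x) (φ x) (f y)| := fun y hB => by rw [hψ_atom x y hB]
    rw [condExp_congr B hdist, condExp_comp_of_mem_zero_one B hf (fun t => |t - _|),
      pullbackValue_dist (hφrange x)]

/-- Let `f : X → {0,1}`, `B` a partition of the finite set `X`, and
`φ` a `B`-measurable `[0,1]`-valued function. On each atom, with `α = E[f|B]` and
`β = φ`, define `ψ(x) = (β−α)/(1−α)` if `α ≤ β, f(x) = 0`; `ψ(x) = 1` if `α ≤ β,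
f(x) = 1`; `ψ(x) = 0` if `α > β, f(x) = 0`; `ψ(x) = β/α` if `α > β, f(x) = 1`.
Then (i) `E[ψ|B] = φ` and (ii) `‖f − ψ‖₁ = ‖E[f|B] − φ‖₁`. -/
theorem pullback_properties {X α : Type*} [Fintype X] [Nonempty X] (B : X → α)
    (f φ ψ : X → ℝ)
    (hf : ∀ x, f x ∈ ({0, 1} : Set ℝ))
    (hφmeas : ∀ x y, B x = B y → φ x = φ y)
    (hφrange : ∀ x, φ x ∈ Set.Icc (0 : ℝ) 1)
    (hψ : ∀ x, ψ x =
      if condExp B f x ≤ φ x then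
        (if f x = 1 then 1 else (φ x - condExp B f x) / (1 - condExp B f x))
      else
        (if f x = 1 then φ x / condExp B f x else 0)) :
    (∀ x, condExp B ψ x = φ x) ∧
    l1Avg (fun x => f x - ψ x) = l1Avg (fun x => condExp B f x - φ x) :=
  pullback_properties_general B f φ ψ hf hφmeas hφrange hψ
end

section
/- Let ψ : F_p^n → [0,1] and let g : F_p^n → {0,1} be random with Pr[g(x)=1] = ψ(x) independently for all x. Then E_g[‖g−ψ‖_{U^d}^{2^d}] ≤ p^{d−n}, where ‖h‖_{U^d}^{2^d} = E_{x,y_1,...,y_d} ∏_{I⊆[d]} h(x+Σ_{i∈I}y_i). -/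
open Finset

/- ### Auxiliary lemmas -/

lemma sum_weight_prod {V : Type*} [Fintype V] [DecidableEq V] (F : V → Bool → ℝ) :
    ∑ g : V → Bool, ∏ v, F v (g v) = ∏ v, (F v true + F v false) := by
  rw [← Fintype.piFinset_univ, ← Finset.prod_univ_sum]
  simp

/-- If the points are pairwise distinct, the expectation of the product vanishes. -/
lemma indep_zero {V : Type*} [Fintype V] [DecidableEq V] {d : ℕ} (ψ : V → ℝ)
    (pts : Finset (Fin d) → V) (hinj : Function.Injective pts) :
    ∑ g : V → Bool, (∏ v, if g v then ψ v else 1 - ψ v) *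
      ∏ I : Finset (Fin d), ((if g (pts I) then (1:ℝ) else 0) - ψ (pts I)) = 0 := by
  classical
  set S := Finset.image pts Finset.univ with hS
  have key : ∀ g : V → Bool,
      (∏ v, if g v then ψ v else 1 - ψ v) *
        ∏ I : Finset (Fin d), ((if g (pts I) then (1:ℝ) else 0) - ψ (pts I))
      = ∏ v, ((fun v (b : Bool) => (if b then ψ v else 1 - ψ v) *
          (if v ∈ S then ((if b then (1:ℝ) else 0) - ψ v) else 1)) v (g v)) := by
    intro g
    simp only []
    rw [Finset.prod_mul_distrib]
    congr 1
    exact (Finset.prod_image (f := fun v => (if g v then (1:ℝ) else 0) - ψ v)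
      (fun a _ b _ h => hinj h)).symm.trans
      (by rw [Finset.prod_ite_mem, Finset.univ_inter])
  rw [Finset.sum_congr rfl (fun g _ => key g),
    sum_weight_prod (fun v (b : Bool) => (if b then ψ v else 1 - ψ v) *
      (if v ∈ S then ((if b then (1:ℝ) else 0) - ψ v) else 1))]
  apply Finset.prod_eq_zero (Finset.mem_univ (pts ∅))
  have : pts ∅ ∈ S := Finset.mem_image_of_mem pts (Finset.mem_univ ∅)
  simp only [if_pos this]
  norm_num
  ring

/-- For any configuration of points, the expectation of the product is at most `1`. -/
lemma T_le_one {V : Type*} [Fintype V] [DecidableEq V] (ψ : V → ℝ)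
    (hψ : ∀ v, ψ v ∈ Set.Icc (0:ℝ) 1) {d : ℕ} (pts : Finset (Fin d) → V) :
    ∑ g : V → Bool, (∏ v, if g v then ψ v else 1 - ψ v) *
      ∏ I : Finset (Fin d), ((if g (pts I) then (1:ℝ) else 0) - ψ (pts I)) ≤ 1 := by
  classical
  have hw : ∀ g : V → Bool, (0:ℝ) ≤ ∏ v, if g v then ψ v else 1 - ψ v := by
    intro g
    apply Finset.prod_nonneg
    intro v _
    rcases hψ v with ⟨h0, h1⟩
    split <;> linarith
  have hP : ∀ g : V → Bool,
      (∏ I : Finset (Fin d), ((if g (pts I) then (1:ℝ) else 0) - ψ (pts I))) ≤ 1 := by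
    intro g
    calc (∏ I : Finset (Fin d), ((if g (pts I) then (1:ℝ) else 0) - ψ (pts I)))
        ≤ |∏ I : Finset (Fin d), ((if g (pts I) then (1:ℝ) else 0) - ψ (pts I))| := le_abs_self _
      _ = ∏ I : Finset (Fin d), |(if g (pts I) then (1:ℝ) else 0) - ψ (pts I)| :=
          Finset.abs_prod _ _
      _ ≤ 1 := by
          apply Finset.prod_le_one (fun I _ => abs_nonneg _)
          intro I _
          rcases hψ (pts I) with ⟨h0, h1⟩
          rw [abs_le]
          constructor <;> split <;> linarith
  calc ∑ g : V → Bool, (∏ v, if g v then ψ v else 1 - ψ v) *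
        ∏ I : Finset (Fin d), ((if g (pts I) then (1:ℝ) else 0) - ψ (pts I))
      ≤ ∑ g : V → Bool, (∏ v, if g v then ψ v else 1 - ψ v) * 1 :=
        Finset.sum_le_sum (fun g _ => mul_le_mul_of_nonneg_left (hP g) (hw g))
    _ = ∑ g : V → Bool, ∏ v, ((fun v (b : Bool) => if b then ψ v else 1 - ψ v) v (g v)) := by
        simp
    _ = 1 := by
        rw [sum_weight_prod (fun v (b : Bool) => if b then ψ v else 1 - ψ v)]
        simp

/- ### Counting the degenerate configurations -/

def emb {d : ℕ} (i : Fin d) (j : Fin i.1) : Fin d := ⟨j.1, j.2.trans i.2⟩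

lemma emb_lt {d : ℕ} (i : Fin d) (j : Fin i.1) : emb i j < i := by
  simp [emb, Fin.lt_def]

lemma sum_emb {V : Type*} [AddCommGroup V] {d : ℕ} (y : Fin d → V) (i : Fin d)
    (S : Finset (Fin d)) (hS : ∀ k ∈ S, k < i) [DecidableEq (Fin d)] :
    ∑ j : Fin i.1, (if emb i j ∈ S then y (emb i j) else 0) = ∑ k ∈ S, y k := by
  classical
  rw [← Finset.sum_filter]
  refine Finset.sum_bij' (fun j _ => emb i j) (fun k hk => (⟨k.1, hS k hk⟩ : Fin i.1))
    ?_ ?_ ?_ ?_ ?_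
  · intro a ha
    simpa using (Finset.mem_filter.mp ha).2
  · intro a ha
    simp [Finset.mem_filter]
    simpa [emb] using ha
  · intro a _; simp [emb]
  · intro a ha; simp [emb]
  · intro a _; rfl

variable {p n : ℕ}

/-- A parametrization covering all `y` for which `y i` is a linear combination of the
earlier `y j`. -/
def cover (d : ℕ) (i : Fin d) :
    ((Fin i.1 → ZMod p) × ({j : Fin d // j ≠ i} → (Fin n → ZMod p))) →
      (Fin d → (Fin n → ZMod p)) :=
  fun cz k => if h : k = i then
      ∑ j : Fin i.1, cz.1 j • cz.2 ⟨emb i j, Fin.ne_of_lt (emb_lt i j)⟩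
    else cz.2 ⟨k, h⟩

lemma cover_of_eq {d : ℕ} (y : Fin d → Fin n → ZMod p) (A B : Finset (Fin d)) (i : Fin d)
    (hiA : i ∈ A) (hBlt : ∀ k ∈ B, k < i) (hAlt : ∀ k ∈ A.erase i, k < i)
    (hsum : ∑ k ∈ A, y k = ∑ k ∈ B, y k) :
    ∃ cz, cover (p := p) (n := n) d i cz = y := by
  classical
  refine ⟨⟨fun j => (if emb i j ∈ B then 1 else 0) - (if emb i j ∈ A.erase i then 1 else 0),
    fun j => y j.1⟩, ?_⟩
  funext k
  unfold cover
  by_cases h : k = i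
  · rw [dif_pos h]
    subst h
    have : ∀ j : Fin k.1,
        ((if emb k j ∈ B then (1 : ZMod p) else 0) - (if emb k j ∈ A.erase k then 1 else 0)) •
          y (emb k j)
        = (if emb k j ∈ B then y (emb k j) else 0) -
          (if emb k j ∈ A.erase k then y (emb k j) else 0) := by
      intro j
      rw [sub_smul, ite_smul, ite_smul, one_smul, zero_smul]
    simp only [this]
    rw [Finset.sum_sub_distrib, sum_emb y k B hBlt, sum_emb y k (A.erase k) hAlt]
    have h2 : y k + ∑ j ∈ A.erase k, y j = ∑ j ∈ A, y j := Finset.add_sum_erase A y hiA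
    rw [← hsum, ← h2]
    abel
  · rw [dif_neg h]

/-- Every degenerate `y` is covered by some `cover d i`. -/
lemma bad_covered {d : ℕ} (y : Fin d → Fin n → ZMod p)
    (hy : ¬ Function.Injective (fun I : Finset (Fin d) => ∑ k ∈ I, y k)) :
    ∃ i : Fin d, ∃ cz, cover (p := p) (n := n) d i cz = y := by
  classical
  rw [Function.not_injective_iff] at hy
  obtain ⟨I, J, hsum, hne⟩ := hy
  set A := I \ J with hA
  set B := J \ I with hB
  have hdisj : Disjoint A B := disjoint_sdiff_sdiff
  have hAB : ∑ k ∈ A, y k = ∑ k ∈ B, y k := by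
    have h1 : ∑ k ∈ A, y k + ∑ k ∈ I ∩ J, y k = ∑ k ∈ I, y k := by
      rw [hA, ← Finset.sdiff_inter_self_left I J]
      exact Finset.sum_sdiff Finset.inter_subset_left
    have h2 : ∑ k ∈ B, y k + ∑ k ∈ I ∩ J, y k = ∑ k ∈ J, y k := by
      rw [hB, Finset.inter_comm I J, ← Finset.sdiff_inter_self_left J I]
      exact Finset.sum_sdiff Finset.inter_subset_left
    have := h1.trans (hsum.trans h2.symm)
    exact add_right_cancel this
  have hne' : (A ∪ B).Nonempty := by
    rw [Finset.nonempty_iff_ne_empty]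
    intro h
    rw [Finset.union_eq_empty] at h
    exact hne (Finset.Subset.antisymm
      (Finset.sdiff_eq_empty_iff_subset.mp h.1) (Finset.sdiff_eq_empty_iff_subset.mp h.2))
  set i := (A ∪ B).max' hne' with hi
  have hmax : ∀ k ∈ A ∪ B, k ≤ i := fun k hk => Finset.le_max' _ k hk
  have himem : i ∈ A ∪ B := Finset.max'_mem _ _
  refine ⟨i, ?_⟩
  rcases Finset.mem_union.mp himem with hiA | hiB
  · refine cover_of_eq y A B i hiA ?_ ?_ hAB
    · intro k hk
      exact lt_of_le_of_ne (hmax k (Finset.mem_union_right _ hk))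
        (fun h => Finset.disjoint_left.mp hdisj hiA (h ▸ hk))
    · intro k hk
      rcases Finset.mem_erase.mp hk with ⟨hkne, hkA⟩
      exact lt_of_le_of_ne (hmax k (Finset.mem_union_left _ hkA)) hkne
  · refine cover_of_eq y B A i hiB ?_ ?_ hAB.symm
    · intro k hk
      exact lt_of_le_of_ne (hmax k (Finset.mem_union_left _ hk))
        (fun h => Finset.disjoint_left.mp hdisj (h ▸ hk) hiB)
    · intro k hk
      rcases Finset.mem_erase.mp hk with ⟨hkne, hkB⟩
      exact lt_of_le_of_ne (hmax k (Finset.mem_union_right _ hkB)) hkne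

lemma geom_le'' {p : ℕ} (hp : 2 ≤ p) (d : ℕ) : ∑ i ∈ Finset.range d, p ^ i ≤ p ^ d := by
  induction d with
  | zero => simp
  | succ d ih =>
    rw [Finset.sum_range_succ, pow_succ]
    calc ∑ i ∈ Finset.range d, p ^ i + p ^ d ≤ p ^ d + p ^ d := by omega
      _ = p ^ d * 2 := by ring
      _ ≤ p ^ d * p := Nat.mul_le_mul_left _ hp

/-- The number of degenerate `y` is at most `(∑_{i<d} p^i) · (p^n)^{d-1}`. -/
lemma card_bad_le [NeZero p] {d : ℕ} [DecidablePred fun y : Fin d → Fin n → ZMod p =>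
      ¬ Function.Injective (fun I : Finset (Fin d) => ∑ k ∈ I, y k)] :
    (Finset.univ.filter fun y : Fin d → Fin n → ZMod p =>
        ¬ Function.Injective (fun I : Finset (Fin d) => ∑ k ∈ I, y k)).card
      ≤ (∑ i ∈ Finset.range d, p ^ i) * (p ^ n) ^ (d - 1) := by
  classical
  have hsub : (Finset.univ.filter fun y : Fin d → Fin n → ZMod p =>
        ¬ Function.Injective (fun I : Finset (Fin d) => ∑ k ∈ I, y k))
      ⊆ Finset.univ.biUnion (fun i : Fin d =>
          Finset.image (cover (p := p) (n := n) d i) Finset.univ) := by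
    intro y hy
    rcases bad_covered y (Finset.mem_filter.mp hy).2 with ⟨i, cz, hcz⟩
    exact Finset.mem_biUnion.mpr ⟨i, Finset.mem_univ i,
      Finset.mem_image.mpr ⟨cz, Finset.mem_univ cz, hcz⟩⟩
  calc (Finset.univ.filter fun y : Fin d → Fin n → ZMod p =>
        ¬ Function.Injective (fun I : Finset (Fin d) => ∑ k ∈ I, y k)).card
      ≤ (Finset.univ.biUnion (fun i : Fin d =>
          Finset.image (cover (p := p) (n := n) d i) Finset.univ)).card :=
        Finset.card_le_card hsub
    _ ≤ ∑ i : Fin d, (Finset.image (cover (p := p) (n := n) d i) Finset.univ).card :=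
        Finset.card_biUnion_le
    _ ≤ ∑ i : Fin d, p ^ i.1 * (p ^ n) ^ (d - 1) := by
        apply Finset.sum_le_sum
        intro i _
        calc (Finset.image (cover (p := p) (n := n) d i) Finset.univ).card
            ≤ (Finset.univ : Finset ((Fin i.1 → ZMod p) ×
                ({j : Fin d // j ≠ i} → (Fin n → ZMod p)))).card := Finset.card_image_le
          _ = p ^ i.1 * (p ^ n) ^ (d - 1) := by
              simp [ZMod.card, Fintype.card_subtype_compl]
    _ = (∑ i ∈ Finset.range d, p ^ i) * (p ^ n) ^ (d - 1) := by
        rw [← Finset.sum_mul, ← Fin.sum_univ_eq_sum_range]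

/- ### Main theorem -/

/-- Let `ψ : F_p^n → [0,1]` and let `g : F_p^n → {0,1}` be random with
`Pr[g(x)=1] = ψ(x)` independently for each `x` (so the probability of a given
`g : F_p^n → Bool` is `∏_x (ψ x if g x else 1−ψ x)`). Then
`E_g ‖g−ψ‖_{U^d}^{2^d} ≤ p^{d−n}`. -/
theorem sampling_gowers_bound {p n : ℕ} [Fact p.Prime] (d : ℕ)
    (ψ : (Fin n → ZMod p) → ℝ) (hψ : ∀ x, ψ x ∈ Set.Icc (0 : ℝ) 1) :
    ∑ g : (Fin n → ZMod p) → Bool,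
        (∏ x : Fin n → ZMod p, if g x then ψ x else 1 - ψ x) *
          gowersAvg (fun x => (if g x then (1 : ℝ) else 0) - ψ x) d ≤
      (p : ℝ) ^ d / (p : ℝ) ^ n := by
  classical
  have hp : p.Prime := Fact.out
  have hp2 : 2 ≤ p := hp.two_le
  have hppos : (0:ℝ) < (p:ℝ) := by exact_mod_cast hp.pos
  have hcard : (Fintype.card (Fin n → ZMod p) : ℝ) = (p:ℝ) ^ n := by
    simp [ZMod.card]
  set C : ℝ := ((Fintype.card (Fin n → ZMod p) : ℝ)) ^ (d + 1) with hC
  have hCpos : 0 < C := by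
    rw [hC, hcard]
    positivity
  -- the expectation of the product for fixed x, y
  set T : (Fin n → ZMod p) → (Fin d → Fin n → ZMod p) → ℝ := fun x y =>
    ∑ g : (Fin n → ZMod p) → Bool, (∏ v, if g v then ψ v else 1 - ψ v) *
      ∏ I : Finset (Fin d), ((if g (x + ∑ i ∈ I, y i) then (1:ℝ) else 0) - ψ (x + ∑ i ∈ I, y i))
    with hT
  have step1 : ∑ g : (Fin n → ZMod p) → Bool,
        (∏ x : Fin n → ZMod p, if g x then ψ x else 1 - ψ x) *
          gowersAvg (fun x => (if g x then (1 : ℝ) else 0) - ψ x) d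
      = (∑ x : Fin n → ZMod p, ∑ y : Fin d → Fin n → ZMod p, T x y) / C := by
    simp only [gowersAvg, hT]
    simp only [← mul_div_assoc]
    rw [← Finset.sum_div]
    congr 1
    simp only [Finset.mul_sum]
    rw [Finset.sum_comm]
    exact Finset.sum_congr rfl (fun x _ => Finset.sum_comm)
  rw [step1]
  -- pointwise bound on T
  have hTle : ∀ x : Fin n → ZMod p, ∀ y : Fin d → Fin n → ZMod p,
      T x y ≤ if Function.Injective (fun I : Finset (Fin d) => ∑ k ∈ I, y k) then 0 else 1 := by
    intro x y
    split
    · rename_i hinj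
      have hinj' : Function.Injective (fun I : Finset (Fin d) => x + ∑ i ∈ I, y i) := by
        intro a b hab
        exact hinj (add_left_cancel hab)
      exact le_of_eq (indep_zero ψ _ hinj')
    · exact T_le_one ψ hψ _
  -- counting bound
  have hsum2 : ∀ x : Fin n → ZMod p, ∑ y : Fin d → Fin n → ZMod p, T x y
      ≤ ((Finset.univ.filter fun y : Fin d → Fin n → ZMod p =>
          ¬ Function.Injective (fun I : Finset (Fin d) => ∑ k ∈ I, y k)).card : ℝ) := by
    intro x
    calc ∑ y : Fin d → Fin n → ZMod p, T x y
        ≤ ∑ y : Fin d → Fin n → ZMod p,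
            (if Function.Injective (fun I : Finset (Fin d) => ∑ k ∈ I, y k) then (0:ℝ) else 1) :=
          Finset.sum_le_sum (fun y _ => hTle x y)
      _ = ((Finset.univ.filter fun y : Fin d → Fin n → ZMod p =>
          ¬ Function.Injective (fun I : Finset (Fin d) => ∑ k ∈ I, y k)).card : ℝ) := by
          rw [Finset.sum_ite, Finset.sum_const, Finset.sum_const, Finset.filter_not]
          simp [Finset.filter_not]
  have hbad : ((Finset.univ.filter fun y : Fin d → Fin n → ZMod p =>
      ¬ Function.Injective (fun I : Finset (Fin d) => ∑ k ∈ I, y k)).card : ℝ)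
      ≤ ((∑ i ∈ Finset.range d, p ^ i) * (p ^ n) ^ (d - 1) : ℕ) := by
    exact_mod_cast Nat.cast_le.mpr card_bad_le
  have hNum : ∑ x : Fin n → ZMod p, ∑ y : Fin d → Fin n → ZMod p, T x y
      ≤ (p:ℝ) ^ n * ((∑ i ∈ Finset.range d, p ^ i) * (p ^ n) ^ (d - 1) : ℕ) := by
    calc ∑ x : Fin n → ZMod p, ∑ y : Fin d → Fin n → ZMod p, T x y
        ≤ ∑ _x : Fin n → ZMod p,
            (((∑ i ∈ Finset.range d, p ^ i) * (p ^ n) ^ (d - 1) : ℕ) : ℝ) :=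
          Finset.sum_le_sum (fun x _ => le_trans (hsum2 x) hbad)
      _ = (p:ℝ) ^ n * ((∑ i ∈ Finset.range d, p ^ i) * (p ^ n) ^ (d - 1) : ℕ) := by
          rw [Finset.sum_const, nsmul_eq_mul, Finset.card_univ, hcard]
  -- conclude
  rcases Nat.eq_zero_or_pos d with hd | hd
  · subst hd
    have hle0 : ∑ x : Fin n → ZMod p, ∑ y : Fin 0 → Fin n → ZMod p, T x y ≤ 0 := by
      simpa using hNum
    calc (∑ x : Fin n → ZMod p, ∑ y : Fin 0 → Fin n → ZMod p, T x y) / C ≤ 0 / C :=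
        (div_le_div_iff_of_pos_right hCpos).mpr hle0
      _ = 0 := by simp
      _ ≤ (p : ℝ) ^ 0 / (p : ℝ) ^ n := by positivity
  · have hgeom : ((∑ i ∈ Finset.range d, p ^ i) * (p ^ n) ^ (d - 1) : ℕ)
        ≤ (p ^ d * (p ^ n) ^ (d - 1) : ℕ) :=
      Nat.mul_le_mul_right _ (geom_le'' hp2 d)
    have hNum2 : ∑ x : Fin n → ZMod p, ∑ y : Fin d → Fin n → ZMod p, T x y
        ≤ (p:ℝ) ^ n * ((p:ℝ) ^ d * ((p:ℝ) ^ n) ^ (d - 1)) := by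
      refine le_trans hNum ?_
      have hcast : ((((∑ i ∈ Finset.range d, p ^ i) * (p ^ n) ^ (d - 1)) : ℕ) : ℝ)
          ≤ (((p ^ d * (p ^ n) ^ (d - 1)) : ℕ) : ℝ) := Nat.cast_le.mpr hgeom
      calc (p:ℝ) ^ n * ((∑ i ∈ Finset.range d, p ^ i) * (p ^ n) ^ (d - 1) : ℕ)
          ≤ (p:ℝ) ^ n * ((p ^ d * (p ^ n) ^ (d - 1) : ℕ)) :=
            mul_le_mul_of_nonneg_left hcast (by positivity)
        _ = (p:ℝ) ^ n * ((p:ℝ) ^ d * ((p:ℝ) ^ n) ^ (d - 1)) := by push_cast; ring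
    have hkey : (p:ℝ) ^ n * ((p:ℝ) ^ d * ((p:ℝ) ^ n) ^ (d - 1)) / C = (p:ℝ) ^ d / (p:ℝ) ^ n := by
      rw [hC, hcard]
      rw [div_eq_div_iff (by positivity) (by positivity)]
      have hpow : ((p:ℝ) ^ n) ^ (d - 1) * (p:ℝ) ^ n = ((p:ℝ) ^ n) ^ d := by
        rw [← pow_succ]
        congr 1
        omega
      calc (p:ℝ) ^ n * ((p:ℝ) ^ d * ((p:ℝ) ^ n) ^ (d - 1)) * (p:ℝ) ^ n
          = (p:ℝ) ^ d * (((p:ℝ) ^ n) ^ (d - 1) * (p:ℝ) ^ n * (p:ℝ) ^ n) := by ring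
        _ = (p:ℝ) ^ d * (((p:ℝ) ^ n) ^ d * (p:ℝ) ^ n) := by rw [hpow]
        _ = (p:ℝ) ^ d * ((p:ℝ) ^ n) ^ (d + 1) := by rw [pow_succ]
    calc (∑ x : Fin n → ZMod p, ∑ y : Fin d → Fin n → ZMod p, T x y) / C
        ≤ ((p:ℝ) ^ n * ((p:ℝ) ^ d * ((p:ℝ) ^ n) ^ (d - 1))) / C :=
          (div_le_div_iff_of_pos_right hCpos).mpr hNum2
      _ = (p:ℝ) ^ d / (p:ℝ) ^ n := hkey
end
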